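/- Let a ∈ ℝ with 0 < a < 1, and let μ be a probability measure on ℝ with finite first moment (∫ |x| dμ(x) < ∞). For y ∈ ℝ define the density of the noised variable Y = √a·X + √(1−a)·Z (X ∼ μ, Z standard normal independent of X) by p(y) = ∫ φ_{√a·x, 1−a}(y) dμ(x), where φ_{m,v}(y) = (2πv)^{−1/2} exp( −(y − m)²/(2v) ) is the Gaussian density with mean m and variance v. Then p is differentiable on ℝ, and for every y ∈ ℝ, ∫ x · φ_{√a·x, 1−a}(y) dμ(x) = ( y · p(y) + (1 − a) · p'(y) ) / √a. Consequently, wherever p(y) > 0, the posterior mean E[X | Y = y] = (∫ x · φ_{√a·x, 1−a}(y) dμ(x)) / p(y) equals ( y + (1 − a) · (d/dy) log p(y) ) / √a. -/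

import Mathlib

/-!
Write the noised density as a Gaussian location mixture `p(y) = ∫ φ_{m(x),v}(y) dμ(x)`.
Since `∂_y φ_{m,v}(y) = (m - y)/v · φ_{m,v}(y)` and `φ_{m,v} ≤ (2πv)^{-1/2}`, the
derivative is dominated near `y₀` by `(|y₀| + 1 + |m(x)|)/v · (2πv)^{-1/2}`, which is
integrable when `m` is; differentiating under the integral gives
`v p'(y) = ∫ m(x) φ_{m(x),v}(y) dμ(x) - y p(y)`. For `m(x) = √a·x` this is Tweedie's
formula, and its logarithmic form follows from `(log p)' = p'/p`.
-/

open MeasureTheory Real ProbabilityTheory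
open scoped NNReal

lemma rpow_neg_half_mul_exp_eq_gaussianPDFReal {v : ℝ} (hv : 0 ≤ v) (m y : ℝ) :
    (2 * π * v) ^ (-(1 : ℝ) / 2) * rexp (-(y - m) ^ 2 / (2 * v)) =
      gaussianPDFReal m v.toNNReal y := by
  rw [gaussianPDFReal, Real.coe_toNNReal _ hv, Real.sqrt_eq_rpow, ← rpow_neg (by positivity)]
  norm_num

lemma norm_gaussianPDFReal_le (m : ℝ) (v : ℝ≥0) (y : ℝ) :
    ‖gaussianPDFReal m v y‖ ≤ (√(2 * π * v))⁻¹ := by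
  rw [norm_of_nonneg (gaussianPDFReal_nonneg _ _ _), gaussianPDFReal]
  refine mul_le_of_le_one_right (by positivity) (exp_le_one_iff.mpr ?_)
  exact div_nonpos_of_nonpos_of_nonneg (neg_nonpos.mpr (sq_nonneg _)) (by positivity)

lemma continuous_gaussianPDFReal_mean (v : ℝ≥0) (y : ℝ) :
    Continuous fun m => gaussianPDFReal m v y := by
  unfold gaussianPDFReal
  fun_prop

lemma hasDerivAt_gaussianPDFReal (m : ℝ) (v : ℝ≥0) (y : ℝ) :
    HasDerivAt (gaussianPDFReal m v) (-(y - m) / v * gaussianPDFReal m v y) y := by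
  have h : HasDerivAt (fun z => -(z - m) ^ 2 / (2 * v)) (-(y - m) / v) y := by
    refine ((((hasDerivAt_id' y).sub_const m).fun_pow 2).fun_neg.div_const
      (2 * (v : ℝ))).congr_deriv ?_
    ring
  refine (h.exp.const_mul (√(2 * π * v))⁻¹).congr_deriv ?_
  rw [gaussianPDFReal]
  ring

section Mixture

variable {μ : Measure ℝ} [IsFiniteMeasure μ] {m : ℝ → ℝ}

lemma integrable_gaussianPDFReal_comp (hm : AEStronglyMeasurable m μ) (v : ℝ≥0) (y : ℝ) :
    Integrable (fun x => gaussianPDFReal (m x) v y) μ :=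
  (integrable_const (√(2 * π * v))⁻¹).mono'
    ((continuous_gaussianPDFReal_mean v y).comp_aestronglyMeasurable hm)
    (.of_forall fun _ => norm_gaussianPDFReal_le _ _ _)

lemma integrable_mul_gaussianPDFReal_comp (hm : Integrable m μ) (v : ℝ≥0) (y : ℝ) :
    Integrable (fun x => m x * gaussianPDFReal (m x) v y) μ :=
  hm.mul_bdd (integrable_gaussianPDFReal_comp hm.1 v y).1
    (.of_forall fun _ => norm_gaussianPDFReal_le _ _ _)

lemma hasDerivAt_integral_gaussianPDFReal_comp (hm : Integrable m μ) (v : ℝ≥0) (y₀ : ℝ) :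
    HasDerivAt (fun y => ∫ x, gaussianPDFReal (m x) v y ∂μ)
      (∫ x, -(y₀ - m x) / v * gaussianPDFReal (m x) v y₀ ∂μ) y₀ := by
  set C := (√(2 * π * v))⁻¹
  have h_bound : ∀ x, ∀ y ∈ Metric.ball y₀ 1,
      ‖-(y - m x) / v * gaussianPDFReal (m x) v y‖ ≤ (|y₀| + 1 + |m x|) / v * C := by
    intro x y hy
    have hy_le : |y| ≤ |y₀| + 1 := by
      have := abs_sub_abs_le_abs_sub y y₀
      rw [Metric.mem_ball, Real.dist_eq] at hy
      linarith
    rw [norm_mul, norm_div, norm_neg, Real.norm_eq_abs, NNReal.norm_eq]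
    gcongr
    · exact (abs_sub _ _).trans (by gcongr)
    · exact norm_gaussianPDFReal_le _ _ _
  have h_int : Integrable (fun x => (|y₀| + 1 + |m x|) / v * C) μ := by
    simp only [add_div, add_mul]
    exact (integrable_const _).add ((hm.abs.div_const _).mul_const _)
  exact (hasDerivAt_integral_of_dominated_loc_of_deriv_le (Metric.ball_mem_nhds y₀ one_pos)
    (.of_forall fun y => (integrable_gaussianPDFReal_comp hm.1 v y).1)
    (integrable_gaussianPDFReal_comp hm.1 v y₀)
    ((((continuous_const.sub continuous_id).neg.div_const _).comp_aestronglyMeasurable hm.1).mul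
      (integrable_gaussianPDFReal_comp hm.1 v y₀).1)
    (.of_forall h_bound) h_int
    (.of_forall fun x y _ => hasDerivAt_gaussianPDFReal (m x) v y)).2

lemma integral_mul_gaussianPDFReal_comp (hm : Integrable m μ) {v : ℝ≥0} (hv : v ≠ 0) (y : ℝ) :
    ∫ x, m x * gaussianPDFReal (m x) v y ∂μ =
      y * (∫ x, gaussianPDFReal (m x) v y ∂μ) +
        v * deriv (fun y => ∫ x, gaussianPDFReal (m x) v y ∂μ) y := by
  have h_deriv : deriv (fun y => ∫ x, gaussianPDFReal (m x) v y ∂μ) y =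
      ((∫ x, m x * gaussianPDFReal (m x) v y ∂μ) - y * ∫ x, gaussianPDFReal (m x) v y ∂μ) / v := by
    rw [(hasDerivAt_integral_gaussianPDFReal_comp hm v y).deriv, ← integral_const_mul,
      ← integral_sub (integrable_mul_gaussianPDFReal_comp hm v y)
        ((integrable_gaussianPDFReal_comp hm.1 v y).const_mul y), ← integral_div]
    congr 1 with x
    ring
  rw [h_deriv]
  field_simp
  ring

end Mixture

/-- Tweedie's formula in one dimension for the variance-preserving noising
`Y = √a·X + √(1−a)·Z` with `X ∼ μ` and `Z` standard normal: the density of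
the noised variable is differentiable, satisfies the identity
`∫ x φ_{√a x, 1−a}(y) dμ = (y p(y) + (1−a) p'(y)) / √a`, and consequently the
posterior mean is `(y + (1−a) (log p)'(y)) / √a` wherever `p(y) > 0`. -/
theorem stmt_4 (a : ℝ) (ha0 : 0 < a) (ha1 : a < 1)
    (μ : Measure ℝ) [IsProbabilityMeasure μ]
    (hmom : Integrable (fun x : ℝ => |x|) μ)
    (φ : ℝ → ℝ → ℝ → ℝ)
    (hφ : ∀ m v y, φ m v y = (2 * Real.pi * v) ^ (-(1 : ℝ) / 2) *
      Real.exp (-(y - m) ^ 2 / (2 * v)))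
    (p : ℝ → ℝ)
    (hp : ∀ y, p y = ∫ x, φ (Real.sqrt a * x) (1 - a) y ∂μ) :
    (∀ y, DifferentiableAt ℝ p y) ∧
    (∀ y, ∫ x, x * φ (Real.sqrt a * x) (1 - a) y ∂μ =
      (y * p y + (1 - a) * deriv p y) / Real.sqrt a) ∧
    (∀ y, 0 < p y →
      (∫ x, x * φ (Real.sqrt a * x) (1 - a) y ∂μ) / p y =
        (y + (1 - a) * deriv (fun z => Real.log (p z)) y) / Real.sqrt a) := by
  set v := (1 - a).toNNReal
  have hv : (v : ℝ) = 1 - a := Real.coe_toNNReal _ (by linarith)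
  have hφ_eq : ∀ m y, φ m (1 - a) y = gaussianPDFReal m v y := fun m y => by
    rw [hφ, rpow_neg_half_mul_exp_eq_gaussianPDFReal (by linarith)]
  have hp_eq : p = fun y => ∫ x, gaussianPDFReal (√a * x) v y ∂μ := by
    ext y
    simp only [hp, hφ_eq]
  have hm : Integrable (fun x => √a * x) μ :=
    ((integrable_norm_iff aestronglyMeasurable_id).mp hmom).const_mul _
  have hdiff : ∀ y, DifferentiableAt ℝ p y :=
    hp_eq ▸ fun y => (hasDerivAt_integral_gaussianPDFReal_comp hm v y).differentiableAt
  have tweedie : ∀ y, ∫ x, x * φ (√a * x) (1 - a) y ∂μ =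
      (y * p y + (1 - a) * deriv p y) / √a := fun y => by
    have hsa : √a ≠ 0 := (sqrt_pos.mpr ha0).ne'
    simp only [hφ_eq]
    rw [eq_div_iff hsa, ← integral_mul_const, hp_eq, ← hv,
      ← integral_mul_gaussianPDFReal_comp hm (by simp [v, ha1]) y]
    congr 1 with x
    ring
  refine ⟨hdiff, tweedie, fun y hpy => ?_⟩
  rw [tweedie, deriv.log (hdiff y) hpy.ne']
  field_simp
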